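/- arXiv:1510.06973 — 2 statements merged into one kernel-verified Lean document; each statement's English description precedes it below -/
import Mathlib

section
/- If K is a compact nonautonomous random set that is absorbing for a nonautonomous random set M, then the omega-limit set Ω_M attracts M: for all τ ∈ 𝕋 and almost all ω ∈ Ω, lim_{t→∞} dist(Φ(t,τ−t,θ_{−t}ω)M(τ−t,θ_{−t}ω), Ω_M(τ,ω)) = 0, where dist(D₁,D₂) := sup_{x∈D₁} inf_{y∈D₂} d(x,y) is the Hausdorff semi-distance. -/
open MeasureTheory Set Filter Topology

/-- The `(τ,ω)`-fiber of a nonautonomous random set `M ⊆ 𝕋 × Ω × X`. -/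
def fiber {Ω X : Type*} (M : Set (ℝ × Ω × X)) (τ : ℝ) (ω : Ω) : Set X :=
  {x | (τ, ω, x) ∈ M}

/-- A nonautonomous random dynamical system `(θ, Φ)` over the time set `𝕋 = ℝ`,
on a base probability space `(Ω, 𝓕, ℙ)` and a metric phase space `X`. -/
structure NRDS (Ω X : Type*) [MeasurableSpace Ω] [MetricSpace X] [MeasurableSpace X]
    (ℙ : MeasureTheory.Measure Ω) where
  /-- the metric dynamical system modelling the noise -/
  θ : ℝ → Ω → Ω
  /-- the cocycle: `Φ t τ ω x` is the state at time `τ + t` starting from `x` at time `τ` -/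
  Φ : ℝ → ℝ → Ω → X → X
  measurable_θ : Measurable fun p : ℝ × Ω => θ p.1 p.2
  θ_zero : ∀ ω, θ 0 ω = ω
  θ_add : ∀ t s : ℝ, ∀ ω, θ (t + s) ω = θ t (θ s ω)
  measurePreserving_θ : ∀ t : ℝ, MeasurePreserving (θ t) ℙ ℙ
  measurable_Φ : Measurable fun p : ℝ × ℝ × Ω × X => Φ p.1 p.2.1 p.2.2.1 p.2.2.2
  Φ_zero : ∀ τ : ℝ, ∀ x : X, ∀ᵐ ω ∂ℙ, Φ 0 τ ω x = x
  Φ_cocycle : ∀ t s τ : ℝ, ∀ x : X, ∀ᵐ ω ∂ℙ,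
    Φ (t + s) τ ω x = Φ t (τ + s) (θ s ω) (Φ s τ ω x)
  Φ_cont : ∀ᵐ ω ∂ℙ, Continuous fun p : ℝ × ℝ × X => Φ p.1 p.2.1 ω p.2.2

variable {Ω : Type*} [MeasurableSpace Ω]
variable {X : Type*} [MetricSpace X] [TopologicalSpace.SeparableSpace X] [CompleteSpace X]
  [MeasurableSpace X] [BorelSpace X]
variable {ℙ : MeasureTheory.Measure Ω}

/-- The `(τ,ω)`-fiber of the omega-limit set of a nonautonomous random set `M`:
`Ω_M(τ,ω) = ⋂_{T ≥ 0} closure (⋃_{t ≥ T} Φ(t, τ-t, θ_{-t}ω) M(τ-t, θ_{-t}ω))`. -/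
def omegaFib (S : NRDS Ω X ℙ) (M : Set (ℝ × Ω × X)) (τ : ℝ) (ω : Ω) : Set X :=
  ⋂ T ∈ Ici (0 : ℝ), closure (⋃ t ∈ Ici T,
    S.Φ t (τ - t) (S.θ (-t) ω) '' fiber M (τ - t) (S.θ (-t) ω))

/-- The Hausdorff semi-distance `dist(D₁,D₂) = sup_{x ∈ D₁} inf_{y ∈ D₂} d(x,y)`
(with values in `[0,∞]`). -/
noncomputable def semiDist {Y : Type*} [MetricSpace Y] (D₁ D₂ : Set Y) : ENNReal :=
  ⨆ x ∈ D₁, EMetric.infEdist x D₂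

/-- The nonautonomous random set `K` is absorbing for the nonautonomous random set `M`. -/
def Absorbing (S : NRDS Ω X ℙ) (K M : Set (ℝ × Ω × X)) : Prop :=
  ∀ τ : ℝ, ∀ᵐ ω ∂ℙ, ∃ T > (0 : ℝ), ∀ t ≥ T,
    S.Φ t (τ - t) (S.θ (-t) ω) '' fiber M (τ - t) (S.θ (-t) ω) ⊆ fiber K τ ω

/-!
Fix `τ, ω` and write `A t` for the pullback image `Φ(t, τ-t, θ_{-t}ω) M(τ-t, θ_{-t}ω)`; for large
`t` it lies in the compact set `K(τ,ω)`. Given an open neighbourhood `U` of the omega-limit set,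
the compact sets `(K \ U) ∩ closure (⋃ t ≥ T, A t)` decrease in `T` and have empty intersection,
so one of them is empty, i.e. `A t ⊆ U` for large `t`. Taking for `U` the open
`ε`-neighbourhoods of the omega-limit set gives the convergence of the semi-distance.
-/

def omegaLimitFamily {β : Type*} [TopologicalSpace β] (A : ℝ → Set β) : Set β :=
  ⋂ T ∈ Ici (0 : ℝ), closure (⋃ t ∈ Ici T, A t)

section

variable {β : Type*} (A : ℝ → Set β) {K : Set β}

theorem eventually_subset_of_isCompact_absorbing_of_isOpen_of_omegaLimitFamily_subset
    [TopologicalSpace β] (hK : IsCompact K) (habs : ∀ᶠ t in atTop, A t ⊆ K) {U : Set β}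
    (hU : IsOpen U) (hLU : omegaLimitFamily A ⊆ U) : ∀ᶠ t in atTop, A t ⊆ U := by
  have hanti : Antitone fun T : Ici (0 : ℝ) => closure (⋃ t ∈ Ici (T : ℝ), A t) :=
    fun _ _ hij => closure_mono (biUnion_subset_biUnion_left (Ici_subset_Ici.2 hij))
  have hempty : (K \ U) ∩ ⋂ T : Ici (0 : ℝ), closure (⋃ t ∈ Ici (T : ℝ), A t) = ∅ := by
    refine eq_empty_of_forall_notMem fun x ⟨⟨_, hxU⟩, hxL⟩ => hxU (hLU ?_)
    exact mem_iInter₂.2 fun T hT => mem_iInter.1 hxL ⟨T, hT⟩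
  obtain ⟨T, hT⟩ := (hK.diff hU).elim_directed_family_closed _ (fun _ => isClosed_closure)
    hempty hanti.directed_ge
  filter_upwards [habs, eventually_ge_atTop (T : ℝ)] with t hAK htT x hx
  by_contra hxU
  exact eq_empty_iff_forall_notMem.1 hT x ⟨⟨hAK hx, hxU⟩, subset_closure (mem_biUnion htT hx)⟩

theorem tendsto_semiDist_omegaLimitFamily [MetricSpace β] (hK : IsCompact K)
    (habs : ∀ᶠ t in atTop, A t ⊆ K) :
    Tendsto (fun t => semiDist (A t) (omegaLimitFamily A)) atTop (𝓝 0) := by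
  rw [ENNReal.tendsto_nhds_zero]
  intro ε hε
  have hnbhd := eventually_subset_of_isCompact_absorbing_of_isOpen_of_omegaLimitFamily_subset A
    hK habs (isOpen_lt Metric.continuous_infEDist continuous_const)
    fun y hy => (Metric.infEDist_zero_of_mem hy).trans_lt hε
  filter_upwards [hnbhd] with t ht
  exact iSup₂_le fun x hx => (ht hx).le

end

theorem omegaLimit_attracts_general (ℙ : Measure Ω)
    (S : NRDS Ω X ℙ) (M K : Set (ℝ × Ω × X))
    (hKcomp : ∀ τ : ℝ, ∀ ω : Ω, IsCompact (fiber K τ ω))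
    (habs : Absorbing S K M) :
    ∀ τ : ℝ, ∀ᵐ ω ∂ℙ,
      Tendsto (fun t : ℝ =>
          semiDist (S.Φ t (τ - t) (S.θ (-t) ω) '' fiber M (τ - t) (S.θ (-t) ω))
            (omegaFib S M τ ω))
        atTop (nhds 0) := by
  intro τ
  filter_upwards [habs τ] with ω hω
  obtain ⟨T, -, hT⟩ := hω
  exact tendsto_semiDist_omegaLimitFamily _ (hKcomp τ ω) (eventually_atTop.2 ⟨T, hT⟩)

/-- if `K` is a compact nonautonomous random set absorbing `M`, then the
omega-limit set `Ω_M` attracts `M`: the Hausdorff semi-distance of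
`Φ(t, τ-t, θ_{-t}ω) M(τ-t, θ_{-t}ω)` from `Ω_M(τ,ω)` tends to `0` as `t → ∞`. -/
theorem omegaLimit_attracts (ℙ : Measure Ω) [IsProbabilityMeasure ℙ]
    (S : NRDS Ω X ℙ) (M K : Set (ℝ × Ω × X))
    (hM : MeasurableSet M) (hK : MeasurableSet K)
    (hKcomp : ∀ τ : ℝ, ∀ ω : Ω, IsCompact (fiber K τ ω))
    (habs : Absorbing S K M) :
    ∀ τ : ℝ, ∀ᵐ ω ∂ℙ,
      Tendsto (fun t : ℝ =>
          semiDist (S.Φ t (τ - t) (S.θ (-t) ω) '' fiber M (τ - t) (S.θ (-t) ω))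
            (omegaFib S M τ ω))
        atTop (nhds 0) :=
  omegaLimit_attracts_general ℙ S M K hKcomp habs
end

section
/- The drift of the overdamped periodically forced Duffing equation satisfies the integrability condition: for all α, β > 0, A, ν ∈ ℝ, every c > 0, every t ∈ ℝ, and every continuous function u : ℝ → ℝ with sub-exponential growth (i.e. for every ε > 0 there exists C_ε > 0 with |u(r)| ≤ C_ε e^{ε|r|} for all r ∈ ℝ), the function r ↦ e^{cr}·(α·u(r) − β·u(r)³ + A·cos(νr))² is integrable on the half-line (−∞, t], i.e. ∫_{−∞}^{t} e^{cr}|f(r,u(r))|² dr < ∞ where f(t,x) := αx − βx³ + A·cos(νt). -/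
/-!
Functions of sub-exponential growth form a ring containing the bounded functions, so the drift
`r ↦ α u(r) - β u(r)³ + A cos(νr)` has sub-exponential growth, and so does its square. Bounding it
by `C e^{c|r|/2}`, the integrand is at most a constant times `e^{cr/2}` on `(-∞, t]`.
-/

open MeasureTheory Set

def SubexpGrowth (u : ℝ → ℝ) : Prop :=
  ∀ ε : ℝ, 0 < ε → ∃ C : ℝ, 0 < C ∧ ∀ r : ℝ, |u r| ≤ C * Real.exp (ε * |r|)

namespace SubexpGrowth

variable {u v : ℝ → ℝ}

theorem of_abs_le_const (B : ℝ) (h : ∀ r, |u r| ≤ B) : SubexpGrowth u := by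
  intro ε hε
  refine ⟨max B 1, by positivity, fun r => ?_⟩
  calc |u r| ≤ max B 1 := (h r).trans (le_max_left _ _)
    _ ≤ max B 1 * Real.exp (ε * |r|) :=
      le_mul_of_one_le_right (by positivity) (Real.one_le_exp (by positivity))

theorem add (hu : SubexpGrowth u) (hv : SubexpGrowth v) : SubexpGrowth (fun r => u r + v r) := by
  intro ε hε
  obtain ⟨C₁, hC₁, hu⟩ := hu ε hε
  obtain ⟨C₂, hC₂, hv⟩ := hv ε hε
  refine ⟨C₁ + C₂, by positivity, fun r => ?_⟩
  calc |u r + v r| ≤ |u r| + |v r| := abs_add_le _ _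
    _ ≤ C₁ * Real.exp (ε * |r|) + C₂ * Real.exp (ε * |r|) := add_le_add (hu r) (hv r)
    _ = (C₁ + C₂) * Real.exp (ε * |r|) := by ring

theorem neg (hu : SubexpGrowth u) : SubexpGrowth (fun r => -u r) := by
  simpa only [SubexpGrowth, abs_neg] using hu

theorem sub (hu : SubexpGrowth u) (hv : SubexpGrowth v) : SubexpGrowth (fun r => u r - v r) := by
  simpa only [sub_eq_add_neg] using hu.add hv.neg

theorem mul (hu : SubexpGrowth u) (hv : SubexpGrowth v) : SubexpGrowth (fun r => u r * v r) := by
  intro ε hε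
  obtain ⟨C₁, hC₁, hu⟩ := hu (ε / 2) (half_pos hε)
  obtain ⟨C₂, hC₂, hv⟩ := hv (ε / 2) (half_pos hε)
  refine ⟨C₁ * C₂, by positivity, fun r => ?_⟩
  calc |u r * v r| = |u r| * |v r| := abs_mul _ _
    _ ≤ C₁ * Real.exp (ε / 2 * |r|) * (C₂ * Real.exp (ε / 2 * |r|)) :=
      mul_le_mul (hu r) (hv r) (abs_nonneg _) (by positivity)
    _ = C₁ * C₂ * Real.exp (ε * |r|) := by
      rw [mul_mul_mul_comm, ← Real.exp_add]
      ring_nf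

theorem const_mul (a : ℝ) (hu : SubexpGrowth u) : SubexpGrowth (fun r => a * u r) :=
  (of_abs_le_const |a| fun _ => le_rfl).mul hu

theorem pow (hu : SubexpGrowth u) (n : ℕ) : SubexpGrowth (fun r => u r ^ n) := by
  induction n with
  | zero => simpa only [pow_zero] using of_abs_le_const (u := fun _ => 1) 1 fun _ => by simp
  | succ n ih => simpa only [pow_succ] using ih.mul hu

end SubexpGrowth

theorem add_abs_le_two_mul_abs_of_le {r t : ℝ} (h : r ≤ t) : r + |r| ≤ 2 * |t| := by
  rcases abs_cases r with ⟨hr, _⟩ | ⟨hr, _⟩ <;> linarith [le_abs_self t, abs_nonneg t]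

theorem SubexpGrowth.integrableOn_exp_mul_Iic {g : ℝ → ℝ} (hg : SubexpGrowth g)
    (hgc : Continuous g) {c : ℝ} (hc : 0 < c) (t : ℝ) :
    IntegrableOn (fun r => Real.exp (c * r) * g r) (Iic t) := by
  obtain ⟨C, hC, hgC⟩ := hg (c / 2) (half_pos hc)
  refine ((_root_.integrableOn_exp_mul_Iic (half_pos hc) t).const_mul (C * Real.exp (c * |t|))).mono'
    (by fun_prop : Continuous fun r => Real.exp (c * r) * g r).aestronglyMeasurable.restrict ?_
  rw [ae_restrict_iff' measurableSet_Iic]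
  refine Filter.Eventually.of_forall fun r (hr : r ≤ t) => ?_
  have hexponent : c * r + c / 2 * |r| ≤ c * |t| + c / 2 * r := by
    nlinarith [add_abs_le_two_mul_abs_of_le hr]
  calc ‖Real.exp (c * r) * g r‖ = Real.exp (c * r) * |g r| := by
        rw [Real.norm_eq_abs, abs_mul, Real.abs_exp]
    _ ≤ Real.exp (c * r) * (C * Real.exp (c / 2 * |r|)) :=
      mul_le_mul_of_nonneg_left (hgC r) (Real.exp_pos _).le
    _ = C * Real.exp (c * r + c / 2 * |r|) := by rw [Real.exp_add]; ring
    _ ≤ C * Real.exp (c * |t| + c / 2 * r) := by gcongr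
    _ = C * Real.exp (c * |t|) * Real.exp (c / 2 * r) := by rw [Real.exp_add]; ring

/-- the drift `f(t,x) = αx − βx³ + A cos(νt)` of the overdamped
periodically forced Duffing equation satisfies the integrability condition: for every
`c > 0`, every `t ∈ ℝ` and every continuous `u : ℝ → ℝ` of sub-exponential growth,
`∫_{-∞}^{t} e^{cr} |f(r,u(r))|² dr < ∞`. -/
theorem duffing_drift_integrable :
    ∀ α β : ℝ, 0 < α → 0 < β → ∀ A ν : ℝ, ∀ c : ℝ, 0 < c → ∀ t : ℝ,
      ∀ u : ℝ → ℝ, Continuous u →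
        (∀ ε : ℝ, 0 < ε → ∃ C : ℝ, 0 < C ∧ ∀ r : ℝ, |u r| ≤ C * Real.exp (ε * |r|)) →
        MeasureTheory.IntegrableOn
          (fun r : ℝ => Real.exp (c * r) *
            |α * u r - β * u r ^ 3 + A * Real.cos (ν * r)| ^ 2)
          (Set.Iic t) := by
  intro α β _ _ A ν c hc t u hu hgrow
  have hgrow : SubexpGrowth u := hgrow
  have hcos : SubexpGrowth fun r => A * Real.cos (ν * r) :=
    .of_abs_le_const |A| fun r => by
      rw [abs_mul]
      exact mul_le_of_le_one_right (abs_nonneg A) (Real.abs_cos_le_one _)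
  have hdrift : SubexpGrowth fun r => α * u r - β * u r ^ 3 + A * Real.cos (ν * r) :=
    ((hgrow.const_mul α).sub ((hgrow.pow 3).const_mul β)).add hcos
  simpa only [sq_abs] using (hdrift.pow 2).integrableOn_exp_mul_Iic (by fun_prop) hc t
end
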